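/- In the polynomial ring 𝔽₁₇[x,y], the coefficient of the monomial x^287 y^261 in the polynomial x^116 · y^192 · (x+y)^240 is nonzero; moreover 287 < 17² − 1 and 261 < 17² − 1. -/

import Mathlib

/-!
Expanding `(x + y)²⁴⁰` binomially, the only term of `x¹¹⁶ y¹⁹² (x + y)²⁴⁰` in degree `x²⁸⁷ y²⁶¹`
is `C(240, 171) x²⁸⁷ y²⁶¹`. By Lucas's theorem, with `240 = 14·17 + 2` and `171 = 10·17 + 1`,
`C(240, 171) ≡ C(2, 1) C(14, 10) = 2002 ≡ 13 (mod 17)`.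
-/

open MvPolynomial

theorem MvPolynomial.coeff_X_pow_mul_X_pow_mul_add_pow {R : Type*} [CommSemiring R]
    {a b n k : ℕ} (hk : k ≤ n) :
    coeff (Finsupp.single 0 (a + k) + Finsupp.single 1 (b + (n - k)))
      ((X 0 : MvPolynomial (Fin 2) R) ^ a * X 1 ^ b * (X 0 + X 1) ^ n) = (n.choose k : R) := by
  have hmon : (X 0 : MvPolynomial (Fin 2) R) ^ a * X 1 ^ b =
      monomial (Finsupp.single 0 a + Finsupp.single 1 b) 1 := by
    rw [monomial_fin_two]
    simp
  have hexp : Finsupp.single 0 (a + k) + Finsupp.single 1 (b + (n - k)) =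
      (Finsupp.single 0 a + Finsupp.single 1 b) +
        (Finsupp.single 0 k + Finsupp.single 1 (n - k) : Fin 2 →₀ ℕ) := by
    simp only [Finsupp.single_add]
    abel
  rw [hmon, hexp, coeff_monomial_mul, one_mul, coeff_add_pow, if_pos (by simp [hk])]
  simp

theorem ZMod.natCast_choose_eq_choose_mod_mul_choose_div {p : ℕ} (hp : p.Prime) (n k : ℕ) :
    (n.choose k : ZMod p) = (n % p).choose (k % p) * (n / p).choose (k / p) := by
  have : Fact p.Prime := ⟨hp⟩
  exact_mod_cast (ZMod.natCast_eq_natCast_iff _ _ _).mpr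
    Choose.choose_modEq_choose_mod_mul_choose_div_nat

/-- Verification in Proposition 3.8 for p = 17, e = 2. -/
theorem stmt_14 :
    MvPolynomial.coeff (Finsupp.single 0 287 + Finsupp.single 1 261)
      ((X 0 : MvPolynomial (Fin 2) (ZMod 17)) ^ 116 * X 1 ^ 192 * (X 0 + X 1) ^ 240) ≠ 0 ∧
    (287 : ℕ) < 17 ^ 2 - 1 ∧ (261 : ℕ) < 17 ^ 2 - 1 := by
  refine ⟨?_, by norm_num, by norm_num⟩
  rw [show (287 : ℕ) = 116 + 171 from rfl, show (261 : ℕ) = 192 + (240 - 171) from rfl,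
    coeff_X_pow_mul_X_pow_mul_add_pow (by norm_num),
    ZMod.natCast_choose_eq_choose_mod_mul_choose_div (by norm_num)]
  decide
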